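/- arXiv:1604.03266 — 5 statements merged into one kernel-verified Lean document; each statement's English description precedes it below -/
import Mathlib

section
/- Let B ⊆ ℝⁿ be a convex set of diameter at most D, let f : ℝⁿ → ℝ be differentiable and α-exp-concave on B (α > 0), and suppose ‖∇f(x)‖₂ ≤ G for all x ∈ B. Then for every η with 0 < η ≤ (1/2)·min{α, 1/(4GD)} and every x, y ∈ B, one has f(y) ≥ f(x) + ⟨∇f(x), y − x⟩ + (η/2)·⟨∇f(x), y − x⟩². -/
set_option maxHeartbeats 1000000

open Matrix RealInnerProductSpace

lemma key_ineq {z : ℝ} (hz : |z| ≤ 1/4) : 1 + z ≤ Real.exp (z - z^2/4) := by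
  have hz1 : -(1/4) ≤ z := neg_le_of_abs_le hz
  have hz2 : z ≤ 1/4 := le_of_abs_le hz
  have habs : |z - z^2/4| ≤ 1 := by
    rw [abs_le]; constructor <;> nlinarith [sq_nonneg z]
  have h := Real.exp_bound habs (n := 3) (by norm_num)
  have h1 := (abs_sub_le_iff.mp h).2
  have hsum : ∑ m ∈ Finset.range 3, (z - z^2/4) ^ m / m.factorial
      = 1 + (z - z^2/4) + (z - z^2/4)^2/2 := by
    simp [Finset.sum_range_succ]
  rw [hsum] at h1
  have htabs : |z - z^2/4| ≤ 17/64 := by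
    rw [abs_le]; constructor <;> nlinarith [sq_nonneg z]
  have ht3 : |z - z^2/4|^3 ≤ (17/64) * (z - z^2/4)^2 := by
    have h2 : |z - z^2/4|^3 = |z - z^2/4| * (z - z^2/4)^2 := by
      rw [pow_succ, sq_abs, sq]; ring
    rw [h2]
    nlinarith [sq_nonneg (z - z^2/4), abs_nonneg (z - z^2/4)]
  have hc : ((3:ℕ).succ / ((3:ℕ).factorial * (3:ℕ)) : ℝ) = 2/9 := by
    norm_num [Nat.factorial]
  rw [hc] at h1
  nlinarith [sq_nonneg z, sq_nonneg (z*z), mul_self_nonneg (z*(1 - z/4))]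

lemma concave_grad {E : Type*} [NormedAddCommGroup E] [InnerProductSpace ℝ E]
    [CompleteSpace E]
    {B : Set E} {h : E → ℝ} (hconc : ConcaveOn ℝ B h)
    {x y : E} (hx : x ∈ B) (hy : y ∈ B) {g : E} (hg : HasGradientAt h g x) :
    h y ≤ h x + ⟪g, y - x⟫ := by
  have hfd : HasFDerivAt h (InnerProductSpace.toDual ℝ E g) x :=
    hasGradientAt_iff_hasFDerivAt.mp hg
  set c : ℝ → E := fun t => x + t • (y - x) with hc
  have hcd : ∀ t : ℝ, HasDerivAt c (y - x) t := by
    intro t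
    simpa [hc] using ((hasDerivAt_id t).smul_const (y - x)).const_add x
  have hc0 : c 0 = x := by simp [hc]
  have hφ : HasDerivAt (h ∘ c) ⟪g, y - x⟫ 0 := by
    have := (hc0 ▸ hfd).comp_hasDerivAt 0 (hcd 0)
    simpa [InnerProductSpace.toDual_apply_apply] using this
  have hslope : Filter.Tendsto (slope (h ∘ c) 0) (nhdsWithin 0 (Set.Ioi 0))
      (nhds ⟪g, y - x⟫) :=
    (hasDerivAt_iff_tendsto_slope.mp hφ).mono_left
      (nhdsWithin_mono 0 (fun t ht => Set.mem_compl_singleton_iff.mpr (ne_of_gt ht)))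
  have hev : ∀ t ∈ Set.Ioc (0:ℝ) 1, h y - h x ≤ slope (h ∘ c) 0 t := by
    intro t ht
    obtain ⟨ht0, ht1⟩ := ht
    have hcomb := hconc.2 hx hy (by linarith : (0:ℝ) ≤ 1 - t) ht0.le (by ring)
    have hpt : (1 - t) • x + t • y = c t := by
      simp [hc, smul_sub, sub_smul]; abel
    rw [hpt] at hcomb
    simp only [slope_def_field, Function.comp_apply, hc0, sub_zero]
    rw [le_div_iff₀ ht0]
    simp only [smul_eq_mul] at hcomb
    nlinarith [hcomb]
  have hfin : h y - h x ≤ ⟪g, y - x⟫ :=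
    ge_of_tendsto hslope
      (Filter.eventually_of_mem
        (Ioc_mem_nhdsGT_of_mem (Set.left_mem_Ico.mpr zero_lt_one)) hev)
  linarith

lemma exp_concave_pow {E : Type*} [NormedAddCommGroup E] [InnerProductSpace ℝ E]
    {B : Set E} {f : E → ℝ} {α β : ℝ} (hα : 0 < α) (hβ0 : 0 ≤ β) (hβα : β ≤ α)
    (hexp : ConcaveOn ℝ B (fun x => Real.exp (-α * f x))) :
    ConcaveOn ℝ B (fun x => Real.exp (-β * f x)) := by
  have hθ0 : 0 ≤ β / α := by positivity
  have hθ1 : β / α ≤ 1 := by rw [div_le_one hα]; exact hβα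
  have hrw : ∀ v, Real.exp (-β * f v) = (Real.exp (-α * f v)) ^ (β/α) := by
    intro v
    rw [← Real.exp_mul]
    congr 1
    field_simp
  refine ⟨hexp.1, fun a ha b hb p q hp hq hpq => ?_⟩
  simp only [hrw]
  have hga : (0:ℝ) ≤ Real.exp (-α * f a) := (Real.exp_pos _).le
  have hgb : (0:ℝ) ≤ Real.exp (-α * f b) := (Real.exp_pos _).le
  have hcomb := hexp.2 ha hb hp hq hpq
  simp only [smul_eq_mul] at hcomb ⊢
  have hnn : (0:ℝ) ≤ p * Real.exp (-α * f a) + q * Real.exp (-α * f b) := by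
    nlinarith
  calc p * Real.exp (-α * f a) ^ (β/α) + q * Real.exp (-α * f b) ^ (β/α)
      ≤ (p * Real.exp (-α * f a) + q * Real.exp (-α * f b)) ^ (β/α) := by
        have := (Real.concaveOn_rpow hθ0 hθ1).2 (Set.mem_Ici.mpr hga)
          (Set.mem_Ici.mpr hgb) hp hq hpq
        simpa using this
    _ ≤ (Real.exp (-α * f (p • a + q • b))) ^ (β/α) :=
        Real.rpow_le_rpow hnn hcomb hθ0

lemma grad_exp_comp {E : Type*} [NormedAddCommGroup E] [InnerProductSpace ℝ E]
    [CompleteSpace E] {f : E → ℝ} {g x : E} (hf : HasGradientAt f g x) (c : ℝ) :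
    HasGradientAt (fun v => Real.exp (c * f v)) ((Real.exp (c * f x) * c) • g) x := by
  have hfd : HasFDerivAt f (InnerProductSpace.toDual ℝ E g) x :=
    hasGradientAt_iff_hasFDerivAt.mp hf
  have hde : HasDerivAt (fun s : ℝ => Real.exp (c * s))
      (Real.exp (c * f x) * c) (f x) := by
    simpa using ((hasDerivAt_id (f x)).const_mul c).exp
  have hcomp := hde.comp_hasFDerivAt x hfd
  rw [hasGradientAt_iff_hasFDerivAt]
  convert hcomp using 1
  ext v
  simp [InnerProductSpace.toDual_apply_apply, real_inner_smul_left]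
  · rfl
  · simp

/-- If `f` is differentiable and `α`-exp-concave on a convex set `B` of
diameter at most `D`, with gradients bounded by `G`, then for every
`0 < η ≤ (1/2)·min {α, 1/(4GD)}` and `x, y ∈ B`,
`f y ≥ f x + ⟪∇f x, y − x⟫ + (η/2)·⟪∇f x, y − x⟫²`. -/
theorem exp_concave_lower_bound {n : ℕ}
    (B : Set (EuclideanSpace ℝ (Fin n))) (hB : Convex ℝ B)
    (D G α : ℝ) (hD : 0 < D) (hG : 0 < G) (hα : 0 < α)
    (hdiam : ∀ x ∈ B, ∀ y ∈ B, ‖x - y‖ ≤ D)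
    (f : EuclideanSpace ℝ (Fin n) → ℝ)
    (f' : EuclideanSpace ℝ (Fin n) → EuclideanSpace ℝ (Fin n))
    (hdiff : ∀ x ∈ B, HasGradientAt f (f' x) x)
    (hexp : ConcaveOn ℝ B (fun x => Real.exp (-α * f x)))
    (hGbd : ∀ x ∈ B, ‖f' x‖ ≤ G)
    (η : ℝ) (hη0 : 0 < η) (hη : η ≤ (1/2) * min α (1/(4*G*D)))
    (x y : EuclideanSpace ℝ (Fin n)) (hx : x ∈ B) (hy : y ∈ B) :
    f y ≥ f x + ⟪f' x, y - x⟫ + (η/2) * ⟪f' x, y - x⟫ ^ 2 := by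
  have hGD : 0 < G * D := mul_pos hG hD
  have hηα : 2 * η ≤ α := by
    have := min_le_left α (1/(4*G*D)); linarith [hη, this]
  have hηGD : 2 * η * (G * D) ≤ 1/4 := by
    have h1 : η ≤ (1/2) * (1/(4*G*D)) := by
      have := min_le_right α (1/(4*G*D)); nlinarith
    have h2 : 2 * η * (G * D) ≤ 2 * ((1/2) * (1/(4*G*D))) * (G*D) := by nlinarith
    have h3 : 2 * ((1/2) * (1/(4*G*D))) * (G*D) = 1/4 := by
      field_simp
    linarith
  have hHconc : ConcaveOn ℝ B (fun v => Real.exp (-(2*η) * f v)) :=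
    exp_concave_pow hα (by linarith) hηα hexp
  have hHgrad : HasGradientAt (fun v => Real.exp (-(2*η) * f v))
      ((Real.exp (-(2*η) * f x) * -(2*η)) • f' x) x := by
    simpa using grad_exp_comp (hdiff x hx) (-(2*η))
  have hfo := concave_grad hHconc hx hy hHgrad
  rw [real_inner_smul_left] at hfo
  set s : ℝ := ⟪f' x, y - x⟫ with hs
  have hsbd : |s| ≤ G * D := by
    calc |s| ≤ ‖f' x‖ * ‖y - x‖ := abs_real_inner_le_norm _ _
      _ ≤ G * D := by
        have h1 := hGbd x hx
        have h2 : ‖y - x‖ ≤ D := hdiam y hy x hx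
        nlinarith [norm_nonneg (f' x), norm_nonneg (y - x)]
  have hzbd : |(-(2*η)) * s| ≤ 1/4 := by
    rw [abs_mul, abs_neg, abs_of_pos (by linarith : (0:ℝ) < 2*η)]
    calc 2*η * |s| ≤ 2*η * (G*D) := by nlinarith [abs_nonneg s]
      _ ≤ 1/4 := hηGD
  have hkey := key_ineq hzbd
  have hHx : (0:ℝ) < Real.exp (-(2*η) * f x) := Real.exp_pos _
  have hchain : Real.exp (-(2*η) * f y)
      ≤ Real.exp (-(2*η) * f x + ((-(2*η))*s - ((-(2*η))*s)^2/4)) := by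
    rw [Real.exp_add]
    calc Real.exp (-(2*η) * f y)
        ≤ Real.exp (-(2*η) * f x) + Real.exp (-(2*η) * f x) * -(2*η) * s := hfo
      _ = Real.exp (-(2*η) * f x) * (1 + (-(2*η)) * s) := by ring
      _ ≤ Real.exp (-(2*η) * f x) * Real.exp ((-(2*η))*s - ((-(2*η))*s)^2/4) :=
          mul_le_mul_of_nonneg_left hkey hHx.le
  have hlin : -(2*η) * f y ≤ -(2*η) * f x + ((-(2*η))*s - ((-(2*η))*s)^2/4) :=
    Real.exp_le_exp.mp hchain
  nlinarith [hlin, hη0, sq_nonneg s]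
end

section
/- Let B ⊆ ℝⁿ be a convex set of diameter at most D, let f₁, …, f_T : ℝⁿ → ℝ be differentiable and α-exp-concave on B (α > 0) with ‖∇f_t(x)‖₂ ≤ G for all x ∈ B and all t, and let w₁, …, w_T ∈ B. Set η = (1/2)·min{α, 1/(4GD)}, ε = 1/(η²D²), u_t = ∇f_t(w_t), A₀ = ε·Iₙ, and A_t = A_{t−1} + u_t u_tᵀ for t = 1, …, T. Then for every T ≥ 2, Σ_{t=1}^{T} u_tᵀ A_t^{−1} u_t ≤ n·log T. -/
open Matrix RealInnerProductSpace

section Helpers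
variable {n : ℕ}

lemma sum_mulVec' {m : ℕ} (s : Finset ℕ) (V : ℕ → Matrix (Fin m) (Fin m) ℝ) (x : Fin m → ℝ) :
    (∑ t ∈ s, V t) *ᵥ x = ∑ t ∈ s, (V t) *ᵥ x := by
  ext i
  simp only [mulVec, dotProduct, Finset.sum_apply, Matrix.sum_apply, Finset.sum_mul]
  rw [Finset.sum_comm]

lemma dotProduct_sum' {m : ℕ} (s : Finset ℕ) (x : Fin m → ℝ) (v : ℕ → Fin m → ℝ) :
    x ⬝ᵥ (∑ t ∈ s, v t) = ∑ t ∈ s, x ⬝ᵥ v t := by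
  simp only [dotProduct, Finset.sum_apply, Finset.mul_sum]
  rw [Finset.sum_comm]

lemma telescope_log (g : ℕ → ℝ) (T : ℕ) :
    ∑ t ∈ Finset.Icc 1 T, (g t - g (t-1)) = g T - g 0 := by
  induction T with
  | zero => simp
  | succ k ih =>
    rw [Finset.sum_Icc_succ_top (by omega : 1 ≤ k+1), ih]
    simp

lemma dotProduct_eq_inner' (x y : EuclideanSpace ℝ (Fin n)) :
    (x : Fin n → ℝ) ⬝ᵥ y = ⟪x, y⟫ := by
  rw [PiLp.inner_apply]; simp [dotProduct, mul_comm]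

lemma vecMulVec_mulVec' (v x : Fin n → ℝ) :
    (vecMulVec v v) *ᵥ x = (v ⬝ᵥ x) • v := by
  ext i
  simp [vecMulVec_apply, mulVec, dotProduct, Finset.mul_sum, Finset.sum_mul, mul_comm,
    mul_assoc, mul_left_comm]

lemma vecMulVec_posSemidef (v : Fin n → ℝ) : (vecMulVec v v).PosSemidef := by
  constructor
  · ext i j; simp [vecMulVec_apply, mul_comm, Matrix.conjTranspose_apply]
  · simpa using (Matrix.posSemidef_vecMulVec_self_star v).2

lemma smul_one_posDef {ε : ℝ} (hε : 0 < ε) :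
    (ε • (1 : Matrix (Fin n) (Fin n) ℝ)).PosDef := by
  have : ε • (1 : Matrix (Fin n) (Fin n) ℝ) = Matrix.diagonal (fun _ => ε) := by
    ext i j; by_cases h : i = j <;> simp [Matrix.one_apply, Matrix.diagonal, h]
  rw [this]
  exact Matrix.posDef_diagonal_iff.mpr fun _ => hε

lemma det_sub_vecMulVec {M : Matrix (Fin n) (Fin n) ℝ} (hM : M.PosDef) (u : Fin n → ℝ) :
    (M - vecMulVec u u).det = M.det * (1 - u ⬝ᵥ M⁻¹ *ᵥ u) := by
  have h1 : M - vecMulVec u u = M + replicateCol Unit (-u) * replicateRow Unit u := by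
    rw [← vecMulVec_eq]
    ext i j
    simp [vecMulVec_apply, sub_eq_add_neg]
  rw [h1, det_add_replicateCol_mul_replicateRow (ι := Unit) (isUnit_iff_ne_zero.mpr hM.det_pos.ne') (-u) u]
  congr 1
  rw [det_unique]
  simp only [Matrix.add_apply, Matrix.one_apply_eq, Matrix.mul_apply, Matrix.replicateRow_apply,
    Matrix.replicateCol_apply, Pi.neg_apply]
  rw [show (u ⬝ᵥ M⁻¹ *ᵥ u) = ∑ j, (∑ k, u k * M⁻¹ k j) * u j by
    simp only [dotProduct, mulVec, Finset.sum_mul, Finset.mul_sum]; rw [Finset.sum_comm]; ring_nf]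
  simp [mul_neg, sub_eq_add_neg, Finset.sum_neg_distrib]

lemma det_le_pow_of_quadform_le {M : Matrix (Fin n) (Fin n) ℝ} (hM : M.PosSemidef) {c : ℝ}
    (hbound : ∀ x : EuclideanSpace ℝ (Fin n), ‖x‖ = 1 → (x : Fin n → ℝ) ⬝ᵥ M *ᵥ x ≤ c) :
    M.det ≤ c ^ n := by
  have hH := hM.isHermitian
  have hdet : M.det = ∏ i, hH.eigenvalues i := by
    simpa using hH.det_eq_prod_eigenvalues
  rw [hdet]
  calc (∏ i, hH.eigenvalues i) ≤ ∏ _i : Fin n, c := by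
        apply Finset.prod_le_prod
        · intro i _; exact hM.eigenvalues_nonneg i
        · intro i _
          rw [hH.eigenvalues_eq i]
          simpa using hbound (hH.eigenvectorBasis i) (hH.eigenvectorBasis.orthonormal.1 i)
    _ = c ^ n := by simp

end Helpers

/-- For `α`-exp-concave losses `f_t` on a convex set `B` of diameter at most
`D` with gradients bounded by `G`, points `w_t ∈ B`, `η = (1/2)·min{α, 1/(4GD)}`,
`ε = 1/(η²D²)`, `u_t = ∇f_t(w_t)`, `A₀ = ε·Iₙ`, `A_t = A_{t−1} + u_t u_tᵀ`, one has
`Σ_{t=1}^T u_tᵀ A_t⁻¹ u_t ≤ n·log T` for every `T ≥ 2`. -/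
theorem sum_mahalanobis_le_n_log {n : ℕ} (T : ℕ) (hT : 2 ≤ T)
    (B : Set (EuclideanSpace ℝ (Fin n))) (hB : Convex ℝ B)
    (D G α : ℝ) (hD : 0 < D) (hG : 0 < G) (hα : 0 < α)
    (hdiam : ∀ x ∈ B, ∀ y ∈ B, ‖x - y‖ ≤ D)
    (f : ℕ → EuclideanSpace ℝ (Fin n) → ℝ)
    (f' : ℕ → EuclideanSpace ℝ (Fin n) → EuclideanSpace ℝ (Fin n))
    (hdiff : ∀ t, ∀ x ∈ B, HasGradientAt (f t) (f' t x) x)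
    (hexp : ∀ t, ConcaveOn ℝ B (fun x => Real.exp (-α * f t x)))
    (hGbd : ∀ t, ∀ x ∈ B, ‖f' t x‖ ≤ G)
    (w : ℕ → EuclideanSpace ℝ (Fin n)) (hw : ∀ t, w t ∈ B)
    (η ε : ℝ) (hη : η = (1/2) * min α (1/(4*G*D))) (hε : ε = 1/(η^2 * D^2))
    (u : ℕ → EuclideanSpace ℝ (Fin n)) (hu : ∀ t, u t = f' t (w t))
    (A : ℕ → Matrix (Fin n) (Fin n) ℝ)
    (hA0 : A 0 = ε • (1 : Matrix (Fin n) (Fin n) ℝ))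
    (hAt : ∀ t, 1 ≤ t → A t = A (t-1) + Matrix.vecMulVec (u t) (u t)) :
    ∑ t ∈ Finset.Icc 1 T, (u t) ⬝ᵥ ((A t)⁻¹).mulVec (u t) ≤ n * Real.log T := by
  have hηpos : 0 < η := by
    rw [hη]; positivity
  have hεpos : 0 < ε := by
    rw [hε]; positivity
  have hGu : ∀ t, ‖u t‖ ≤ G := fun t => by rw [hu t]; exact hGbd t (w t) (hw t)
  have hPD : ∀ t, (A t).PosDef := by
    intro t
    induction t with
    | zero => rw [hA0]; exact smul_one_posDef hεpos
    | succ k ih =>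
      have h1 := hAt (k+1) (by omega)
      simp only [Nat.add_sub_cancel] at h1
      rw [h1]
      exact ih.add_posSemidef (vecMulVec_posSemidef _)
  set d : ℕ → ℝ := fun t => (A t).det with hd
  have hdpos : ∀ t, 0 < d t := fun t => (hPD t).det_pos
  have key : ∀ t ∈ Finset.Icc 1 T,
      (u t) ⬝ᵥ ((A t)⁻¹).mulVec (u t) ≤ Real.log (d t) - Real.log (d (t-1)) := by
    intro t ht
    have ht1 : 1 ≤ t := (Finset.mem_Icc.mp ht).1
    have hsub : A (t-1) = A t - vecMulVec (u t) (u t) := by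
      rw [hAt t ht1]; abel
    set q : ℝ := (u t) ⬝ᵥ ((A t)⁻¹).mulVec (u t) with hq
    have hdet : d (t-1) = d t * (1 - q) := by
      rw [hd]
      simp only
      rw [hsub, det_sub_vecMulVec (hPD t)]
    have hratio : 1 - q = d (t-1) / d t := by
      field_simp [hdet, (hdpos t).ne']
      rw [hdet]; ring
    have hrpos : 0 < d (t-1) / d t := div_pos (hdpos (t-1)) (hdpos t)
    have hlog := Real.log_le_sub_one_of_pos hrpos
    rw [Real.log_div (hdpos (t-1)).ne' (hdpos t).ne'] at hlog
    linarith [hratio]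
  calc ∑ t ∈ Finset.Icc 1 T, (u t) ⬝ᵥ ((A t)⁻¹).mulVec (u t)
      ≤ ∑ t ∈ Finset.Icc 1 T, (Real.log (d t) - Real.log (d (t-1))) :=
        Finset.sum_le_sum key
    _ = Real.log (d T) - Real.log (d 0) := telescope_log (fun i => Real.log (d i)) T
    _ ≤ n * Real.log T := by
        have hAsum : ∀ s, A s = ε • (1 : Matrix (Fin n) (Fin n) ℝ)
            + ∑ t ∈ Finset.Icc 1 s, vecMulVec (u t) (u t) := by
          intro s
          induction s with
          | zero => simp [hA0]
          | succ k ih =>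
            have h1 := hAt (k+1) (by omega)
            simp only [Nat.add_sub_cancel] at h1
            rw [h1, ih, Finset.sum_Icc_succ_top (by omega : 1 ≤ k+1)]
            abel
        have hquad : ∀ x : EuclideanSpace ℝ (Fin n), ‖x‖ = 1 →
            (x : Fin n → ℝ) ⬝ᵥ (A T) *ᵥ x ≤ ε + T * G^2 := by
          intro x hx
          rw [hAsum T, Matrix.add_mulVec, dotProduct_add, sum_mulVec', dotProduct_sum']
          have h1 : (x : Fin n → ℝ) ⬝ᵥ (ε • (1 : Matrix (Fin n) (Fin n) ℝ)) *ᵥ x = ε := by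
            rw [Matrix.smul_mulVec, Matrix.one_mulVec, dotProduct_smul, smul_eq_mul,
              dotProduct_eq_inner', real_inner_self_eq_norm_sq, hx, one_pow, mul_one]
          rw [h1]
          have h2 : ∀ t ∈ Finset.Icc 1 T,
              (x : Fin n → ℝ) ⬝ᵥ (vecMulVec (u t) (u t)) *ᵥ x ≤ G^2 := by
            intro t _
            rw [vecMulVec_mulVec', dotProduct_smul, smul_eq_mul, dotProduct_comm,
              dotProduct_eq_inner', ← sq, ← sq_abs]
            apply pow_le_pow_left₀ (abs_nonneg _)
            calc |⟪x, u t⟫| ≤ ‖x‖ * ‖u t‖ := abs_real_inner_le_norm x (u t)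
              _ ≤ G := by rw [hx, one_mul]; exact hGu t
          calc ε + ∑ t ∈ Finset.Icc 1 T, (x : Fin n → ℝ) ⬝ᵥ (vecMulVec (u t) (u t)) *ᵥ x
              ≤ ε + ∑ _t ∈ Finset.Icc 1 T, G^2 := by
                gcongr with t ht
                exact h2 t ht
            _ = ε + T * G^2 := by
                rw [Finset.sum_const, Nat.card_Icc]
                simp [nsmul_eq_mul]
        have hc : (0:ℝ) < ε + T * G^2 := by positivity
        have hdT : d T ≤ (ε + T * G^2)^n :=
          det_le_pow_of_quadform_le (hPD T).posSemidef hquad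
        have hd0' : Real.log (d 0) = n * Real.log ε := by
          have : d 0 = ε ^ n := by
            rw [hd]; simp [hA0, Matrix.det_smul]
          rw [this, Real.log_pow]
        have hlogT : Real.log (d T) ≤ n * Real.log (ε + T * G^2) := by
          calc Real.log (d T) ≤ Real.log ((ε + T * G^2)^n) :=
                Real.log_le_log (hdpos T) hdT
            _ = n * Real.log (ε + T * G^2) := by rw [Real.log_pow]
        have hT2 : (2:ℝ) ≤ (T:ℝ) := by exact_mod_cast hT
        have hηle : η * (G * D) ≤ 1/8 := by
          have hmin : min α (1/(4*G*D)) ≤ 1/(4*G*D) := min_le_right _ _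
          have hle : η ≤ (1/2) * (1/(4*G*D)) := by
            rw [hη]; nlinarith
          have hGD : 0 < G * D := mul_pos hG hD
          calc η * (G * D) ≤ ((1/2) * (1/(4*G*D))) * (G * D) := by nlinarith
            _ = 1/8 := by field_simp; ring
        have hG2 : G^2 ≤ ε / 64 := by
          rw [hε, div_div, le_div_iff₀ (by positivity : (0:ℝ) < η^2 * D^2 * 64)]
          nlinarith [mul_pos hηpos (mul_pos hG hD), hηle]
        have hkey : ε + T * G^2 ≤ T * ε := by
          nlinarith [hεpos, hT2, hG2]
        have hfin : Real.log (ε + T * G^2) ≤ Real.log T + Real.log ε := by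
          rw [← Real.log_mul (by positivity) hεpos.ne']
          exact Real.log_le_log hc hkey
        calc Real.log (d T) - Real.log (d 0)
            ≤ n * Real.log (ε + T * G^2) - n * Real.log ε := by
              rw [hd0']; linarith
          _ ≤ n * Real.log T := by nlinarith [hfin, Nat.cast_nonneg (α := ℝ) n]
end

section
/- Let B ⊆ ℝⁿ be a compact convex set of diameter at most D, let f_t : ℝⁿ → ℝ be differentiable and α-exp-concave on B (α > 0) with ‖∇f_t(x)‖₂ ≤ G for all x ∈ B, let r : ℝⁿ → ℝ be convex, and set η = (1/2)·min{α, 1/(4GD)}. Let ε > 0, let A_{t−1} be symmetric positive definite, let w_t ∈ B, set A_t = A_{t−1} + ∇f_t(w_t)∇f_t(w_t)ᵀ, and let w_{t+1} be a minimizer over w ∈ B of ⟨∇f_t(w_t), w − w_t⟩ + r(w) + η·D_{A_t}(w‖w_t). Then for every w* ∈ B: (1/η)·[f_t(w_t) − f_t(w*) + r(w_{t+1}) − r(w*)] ≤ D_{A_{t−1}}(w*‖w_t) − D_{A_t}(w*‖w_{t+1}) + (1/(2η²))·∇f_t(w_t)ᵀ A_t^{−1} ∇f_t(w_t). -/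
set_option maxHeartbeats 1000000


open Matrix RealInnerProductSpace

/-- The Bregman divergence `D_A(w‖x) = (1/2)(w − x)ᵀ A (w − x)` generated by
`F_A(w) = (1/2) wᵀ A w`. -/
noncomputable def bregman {n : ℕ} (A : Matrix (Fin n) (Fin n) ℝ)
    (w x : EuclideanSpace ℝ (Fin n)) : ℝ :=
  (1/2) * ((w - x) ⬝ᵥ A.mulVec (w - x))

/- ### Auxiliary lemmas -/

lemma erep_key_log_ineq (u : ℝ) (hu : |u| ≤ 1/2) : 1 - u ≤ Real.exp (-u - u^2/4) := by
  obtain ⟨h1, h2⟩ := abs_le.mp hu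
  rcases le_or_gt 0 u with hpos | hneg
  · have hs2 : (0:ℝ) ≤ 1 - (u + u^2/4)/2 := by nlinarith
    have he : 1 - (u + u^2/4)/2 ≤ Real.exp (-((u + u^2/4)/2)) := by
      have := Real.add_one_le_exp (-((u + u^2/4)/2)); linarith
    have hsq : (1 - (u + u^2/4)/2)^2 ≤ Real.exp (-((u + u^2/4)/2))^2 :=
      pow_le_pow_left₀ hs2 he 2
    have hexp : Real.exp (-((u + u^2/4)/2))^2 = Real.exp (-u - u^2/4) := by
      rw [← Real.exp_nat_mul]; ring_nf
    have h3 : 1 - u ≤ (1 - (u + u^2/4)/2)^2 := by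
      nlinarith [sq_nonneg u, pow_le_pow_left₀ (abs_nonneg u) hu 3]
    calc 1 - u ≤ (1 - (u + u^2/4)/2)^2 := h3
      _ ≤ _ := hsq
      _ = _ := hexp
  · have ht0 : (0:ℝ) ≤ -u - u^2/4 := by
      nlinarith [mul_nonneg (neg_nonneg.2 hneg.le) (by linarith : (0:ℝ) ≤ 1 + u/4)]
    have he : 1 + (-u - u^2/4)/4 ≤ Real.exp ((-u - u^2/4)/4) := by
      have := Real.add_one_le_exp ((-u - u^2/4)/4); linarith
    have h4 : (1 + (-u - u^2/4)/4)^4 ≤ Real.exp ((-u - u^2/4)/4)^4 :=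
      pow_le_pow_left₀ (by linarith) he 4
    have hexp : Real.exp ((-u - u^2/4)/4)^4 = Real.exp (-u - u^2/4) := by
      rw [← Real.exp_nat_mul]; ring_nf
    have h5 : 1 - u ≤ (1 + (-u - u^2/4)/4)^4 := by
      nlinarith [sq_nonneg u, sq_nonneg (u*u), sq_nonneg (u + u^2/4),
        mul_nonneg (mul_nonneg (neg_nonneg.2 hneg.le) (neg_nonneg.2 hneg.le))
          (neg_nonneg.2 hneg.le)]
    calc 1 - u ≤ (1 + (-u - u^2/4)/4)^4 := h5
      _ ≤ _ := h4
      _ = _ := hexp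

lemma erep_inner_eq_dot {n : ℕ} (x y : EuclideanSpace ℝ (Fin n)) : ⟪x, y⟫ = x ⬝ᵥ y := by
  simp [PiLp.inner_apply, dotProduct, RCLike.inner_apply, mul_comm]

lemma erep_bregman_symm {n : ℕ} (A : Matrix (Fin n) (Fin n) ℝ)
    (w x : EuclideanSpace ℝ (Fin n)) : bregman A w x = bregman A x w := by
  unfold bregman
  have h : (x - w : EuclideanSpace ℝ (Fin n)) = (-1 : ℝ) • (w - x) := by simp [neg_sub]
  simp only [WithLp.ofLp_sub]
  rw [show x.ofLp - w.ofLp = -(w.ofLp - x.ofLp) by abel, Matrix.mulVec_neg, neg_dotProduct,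
    dotProduct_neg, neg_neg]

lemma erep_bregman_comb {n : ℕ} (A : Matrix (Fin n) (Fin n) ℝ)
    (x y z : EuclideanSpace ℝ (Fin n)) (a b : ℝ) (hab : a + b = 1) :
    bregman A (a • x + b • y) z
      = a * bregman A x z + b * bregman A y z - a * b * bregman A x y := by
  obtain rfl : b = 1 - a := by linarith
  unfold bregman
  have hxy : (a • x + (1-a) • y - z : EuclideanSpace ℝ (Fin n))
      = a • (x - z) + (1-a) • (y - z) := by module
  have hsub : (x - y : EuclideanSpace ℝ (Fin n)) = (x - z) - (y - z) := by abel
  rw [hxy, hsub]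
  have key : ∀ u v : Fin n → ℝ,
      (1/2) * ((a • u + (1-a) • v) ⬝ᵥ A.mulVec (a • u + (1-a) • v))
        = a * ((1/2) * (u ⬝ᵥ A.mulVec u)) + (1-a) * ((1/2) * (v ⬝ᵥ A.mulVec v))
          - a * (1-a) * ((1/2) * ((u - v) ⬝ᵥ A.mulVec (u - v))) := by
    intro u v
    simp only [Matrix.mulVec_add, Matrix.mulVec_smul, Matrix.mulVec_sub,
      add_dotProduct, sub_dotProduct, smul_dotProduct,
      dotProduct_add, dotProduct_sub, dotProduct_smul,
      smul_eq_mul]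
    ring
  have := key (x - z) (y - z)
  simp only [WithLp.ofLp_sub, WithLp.ofLp_add, WithLp.ofLp_smul] at this ⊢
  convert this using 4
  · module
  · rw [sub_sub_sub_cancel_right]

lemma erep_vecMulVec_mulVec {n : ℕ} (g v : Fin n → ℝ) :
    (Matrix.vecMulVec g g) *ᵥ v = (g ⬝ᵥ v) • g := by
  ext i
  simp only [Matrix.mulVec, Matrix.vecMulVec_apply, dotProduct, Pi.smul_apply, smul_eq_mul,
    Finset.sum_mul]
  refine Finset.sum_congr rfl fun j _ => by ring

lemma erep_vecMulVec_posSemidef {n : ℕ} (g : Fin n → ℝ) :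
    (Matrix.vecMulVec g g).PosSemidef := by
  refine Matrix.PosSemidef.of_dotProduct_mulVec_nonneg ?_ ?_
  · ext i j
    simp [Matrix.conjTranspose_apply, Matrix.vecMulVec_apply, mul_comm]
  · intro x
    rw [star_trivial, erep_vecMulVec_mulVec, dotProduct_smul, smul_eq_mul,
      dotProduct_comm]
    exact mul_self_nonneg _

lemma erep_vecMulVec_quad {n : ℕ} (g v : Fin n → ℝ) :
    v ⬝ᵥ (Matrix.vecMulVec g g) *ᵥ v = (g ⬝ᵥ v)^2 := by
  rw [erep_vecMulVec_mulVec, dotProduct_smul, smul_eq_mul, dotProduct_comm]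
  ring

lemma erep_bregman_split {n : ℕ} (Ap : Matrix (Fin n) (Fin n) ℝ) (g : Fin n → ℝ)
    (w x : EuclideanSpace ℝ (Fin n)) :
    bregman (Ap + Matrix.vecMulVec g g) w x
      = bregman Ap w x + (1/2) * (g ⬝ᵥ (w - x))^2 := by
  unfold bregman
  simp only [WithLp.ofLp_sub]
  rw [Matrix.add_mulVec, dotProduct_add, erep_vecMulVec_quad]
  ring

lemma erep_bregman_nonneg {n : ℕ} {A : Matrix (Fin n) (Fin n) ℝ} (hA : A.PosSemidef)
    (w x : EuclideanSpace ℝ (Fin n)) : 0 ≤ bregman A w x := by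
  unfold bregman
  have := hA.dotProduct_mulVec_nonneg (w - x)
  rw [star_trivial] at this
  simp only [WithLp.ofLp_sub] at this ⊢
  linarith

lemma erep_quad_bound {n : ℕ} (A : Matrix (Fin n) (Fin n) ℝ) (hA : A.PosDef)
    (g u : Fin n → ℝ) (η : ℝ) (hη : 0 < η) :
    -(g ⬝ᵥ u) - (η/2) * (u ⬝ᵥ A *ᵥ u) ≤ 1/(2*η) * (g ⬝ᵥ A⁻¹ *ᵥ g) := by
  have hsym : Aᵀ = A := hA.isHermitian.eq
  set p : Fin n → ℝ := A⁻¹ *ᵥ g with hp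
  have hAp : A *ᵥ p = g := by
    rw [hp, Matrix.mulVec_mulVec, Matrix.mul_nonsing_inv _ hA.det_pos.ne'.isUnit,
      Matrix.one_mulVec]
  have hpu : p ⬝ᵥ (A *ᵥ u) = g ⬝ᵥ u := by
    rw [Matrix.dotProduct_mulVec, ← Matrix.mulVec_transpose, hsym, hAp]
  have hupA : u ⬝ᵥ (A *ᵥ p) = g ⬝ᵥ u := by rw [hAp, dotProduct_comm]
  have hpp : p ⬝ᵥ (A *ᵥ p) = g ⬝ᵥ p := by rw [hAp, dotProduct_comm]
  have hsq : 0 ≤ (u + (1/η) • p) ⬝ᵥ A *ᵥ (u + (1/η) • p) := by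
    have := hA.posSemidef.dotProduct_mulVec_nonneg (u + (1/η) • p)
    rwa [star_trivial] at this
  rw [Matrix.mulVec_add, Matrix.mulVec_smul, add_dotProduct,
    dotProduct_add, dotProduct_add, smul_dotProduct,
    dotProduct_smul, dotProduct_smul, smul_dotProduct,
    smul_eq_mul, smul_eq_mul, smul_eq_mul, smul_eq_mul, hpu, hupA, hpp] at hsq
  have hη2 : (0:ℝ) < η^2 := by positivity
  have hsq2 : 0 ≤ η^2 * (u ⬝ᵥ A *ᵥ u) + 2*η*(g ⬝ᵥ u) + (g ⬝ᵥ p) := by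
    have h := mul_nonneg hη2.le hsq
    have heq : η^2 * (u ⬝ᵥ A *ᵥ u + 1/η * (g ⬝ᵥ u) + (1/η * (g ⬝ᵥ u) + 1/η * (1/η * (g ⬝ᵥ p))))
        = η^2 * (u ⬝ᵥ A *ᵥ u) + 2*η*(g ⬝ᵥ u) + (g ⬝ᵥ p) := by
      field_simp; ring
    linarith [heq ▸ h]
  rw [show (1:ℝ)/(2*η) * (g ⬝ᵥ p) = (g ⬝ᵥ p)/(2*η) by ring,
    le_div_iff₀ (by positivity : (0:ℝ) < 2*η)]
  nlinarith [hsq2]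

lemma erep_exp_concave_pow {n : ℕ} {B : Set (EuclideanSpace ℝ (Fin n))}
    {α η : ℝ} (hα : 0 < α) (hη0 : 0 < η) (h2ηα : 2*η ≤ α)
    {f : EuclideanSpace ℝ (Fin n) → ℝ}
    (hexp : ConcaveOn ℝ B (fun x => Real.exp (-α * f x))) (hB : Convex ℝ B) :
    ConcaveOn ℝ B (fun x => Real.exp (-(2*η) * f x)) := by
  set p : ℝ := (2*η)/α with hp
  have hp0 : 0 ≤ p := by positivity
  have hp1 : p ≤ 1 := by rw [hp, div_le_one hα]; linarith
  have hkey : ∀ x, Real.exp (-(2*η) * f x) = (Real.exp (-α * f x)) ^ p := by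
    intro x
    rw [← Real.exp_mul]
    congr 1
    rw [hp]; field_simp
  refine ⟨hB, fun x hx y hy a b ha hb hab => ?_⟩
  simp only [hkey]
  have h1 : Real.exp (-α * f (a • x + b • y))
      ≥ a * Real.exp (-α * f x) + b * Real.exp (-α * f y) := hexp.2 hx hy ha hb hab
  have h2 : (a * Real.exp (-α * f x) + b * Real.exp (-α * f y)) ^ p
      ≤ (Real.exp (-α * f (a • x + b • y))) ^ p :=
    Real.rpow_le_rpow (by positivity) h1 hp0
  have h3 : a • (Real.exp (-α * f x)) ^ p + b • (Real.exp (-α * f y)) ^ p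
      ≤ (a • Real.exp (-α * f x) + b • Real.exp (-α * f y)) ^ p :=
    (Real.concaveOn_rpow hp0 hp1).2 (x := Real.exp (-α * f x)) (y := Real.exp (-α * f y))
      (Set.mem_Ici.mpr (Real.exp_pos _).le) (Set.mem_Ici.mpr (Real.exp_pos _).le) ha hb hab
  simp only [smul_eq_mul] at h3 ⊢
  exact le_trans h3 h2

lemma erep_exp_concave_grad {n : ℕ} {B : Set (EuclideanSpace ℝ (Fin n))} (hB : Convex ℝ B)
    {α η : ℝ} (hα : 0 < α) (hη0 : 0 < η) (h2ηα : 2*η ≤ α)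
    {f : EuclideanSpace ℝ (Fin n) → ℝ} {f' : EuclideanSpace ℝ (Fin n) → EuclideanSpace ℝ (Fin n)}
    (hdiff : ∀ x ∈ B, HasGradientAt f (f' x) x)
    (hexp : ConcaveOn ℝ B (fun x => Real.exp (-α * f x)))
    {y x : EuclideanSpace ℝ (Fin n)} (hy : y ∈ B) (hx : x ∈ B)
    (hsmall : |2*η*⟪f' y, x - y⟫| ≤ 1/2) :
    f y - f x ≤ -⟪f' y, x - y⟫ - (η/2) * ⟪f' y, x - y⟫^2 := by
  have hexp2 := erep_exp_concave_pow hα hη0 h2ηα hexp hB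
  set d : EuclideanSpace ℝ (Fin n) := x - y with hd
  set Z : ℝ := ⟪f' y, d⟫ with hZ
  set φ : ℝ → ℝ := fun t => Real.exp (-(2*η) * f (y + t • d)) with hφ
  have hc : HasDerivAt (fun t : ℝ => y + t • d) d 0 := by
    simpa using ((hasDerivAt_id (0:ℝ)).smul_const d).const_add y
  have hl : HasFDerivAt f ((InnerProductSpace.toDual ℝ (EuclideanSpace ℝ (Fin n))) (f' y))
      (y + (0:ℝ) • d) := by
    simpa using (hdiff y hy).hasFDerivAt
  have hfd : HasDerivAt (fun t : ℝ => f (y + t • d)) Z 0 := by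
    have h := hl.comp_hasDerivAt 0 hc
    exact h
  have hφd : HasDerivAt φ (Real.exp (-(2*η) * f y) * (-(2*η) * Z)) 0 := by
    have h := (hfd.const_mul (-(2*η))).exp
    simpa [hφ, mul_comm] using h
  have h0 : φ 0 = Real.exp (-(2*η) * f y) := by simp [hφ]
  have h1 : φ 1 = Real.exp (-(2*η) * f x) := by
    simp only [hφ]
    rw [show y + (1:ℝ) • d = x by rw [hd]; module]
  have hslope : ∀ t : ℝ, t ∈ Set.Ioc (0:ℝ) 1 → φ 1 - φ 0 ≤ (φ t - φ 0) / t := by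
    intro t ht
    have hcomb := hexp2.2 hy hx (by linarith [ht.2] : (0:ℝ) ≤ 1 - t) ht.1.le (by ring)
    have heq : (1-t) • y + t • x = y + t • d := by rw [hd]; module
    rw [heq] at hcomb
    have hφt : (1-t) * φ 0 + t * φ 1 ≤ φ t := by
      rw [h0, h1]
      simpa only [smul_eq_mul] using hcomb
    rw [le_div_iff₀ ht.1]
    nlinarith [hφt]
  have htend : Filter.Tendsto (slope φ 0) (nhdsWithin 0 (Set.Ioi 0))
      (nhds (Real.exp (-(2*η) * f y) * (-(2*η) * Z))) :=
    (hasDerivAt_iff_tendsto_slope.mp hφd).mono_left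
      (nhdsWithin_mono 0 (fun t ht => ne_of_gt ht))
  have hineq : φ 1 - φ 0 ≤ Real.exp (-(2*η) * f y) * (-(2*η) * Z) := by
    refine ge_of_tendsto htend ?_
    filter_upwards [Ioc_mem_nhdsGT_of_mem (Set.mem_Ico.mpr ⟨le_refl (0:ℝ), zero_lt_one⟩)]
      with t ht
    simpa [slope_def_field] using hslope t ht
  have hE0 : (0:ℝ) < Real.exp (-(2*η) * f y) := Real.exp_pos _
  have h1' : Real.exp (-(2*η) * f x) ≤ Real.exp (-(2*η) * f y) * (1 - 2*η*Z) := by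
    rw [h0, h1] at hineq
    nlinarith [hineq]
  have hsplit : Real.exp (-(2*η) * f x)
      = Real.exp (2*η*(f y - f x)) * Real.exp (-(2*η) * f y) := by
    rw [← Real.exp_add]; ring_nf
  have hdiv : Real.exp (2*η*(f y - f x)) ≤ 1 - 2*η*Z := by
    rw [hsplit] at h1'
    exact (mul_le_mul_iff_left₀ hE0).mp (by linarith [h1'])
  have hlog := erep_key_log_ineq (2*η*Z) hsmall
  have hfinal : 2*η*(f y - f x) ≤ -(2*η*Z) - (2*η*Z)^2/4 :=
    Real.exp_le_exp.mp (le_trans hdiv hlog)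
  have h2η : (0:ℝ) < 2*η := by linarith
  have hlast : 2*η*(f y - f x) ≤ 2*η*(-Z - (η/2)*Z^2) := by nlinarith [hfinal]
  exact le_of_mul_le_mul_left hlast h2η

/-- single-round inequality for the composite-objective Newton-step update
with an `α`-exp-concave loss `f_t` and a convex regularizer `r`. -/
theorem erep_one_round_inequality {n : ℕ}
    (B : Set (EuclideanSpace ℝ (Fin n))) (hB : Convex ℝ B) (hBc : IsCompact B)
    (D G α : ℝ) (hD : 0 < D) (hG : 0 < G) (hα : 0 < α)
    (hdiam : ∀ x ∈ B, ∀ y ∈ B, ‖x - y‖ ≤ D)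
    (f : EuclideanSpace ℝ (Fin n) → ℝ)
    (f' : EuclideanSpace ℝ (Fin n) → EuclideanSpace ℝ (Fin n))
    (hdiff : ∀ x ∈ B, HasGradientAt f (f' x) x)
    (hexp : ConcaveOn ℝ B (fun x => Real.exp (-α * f x)))
    (hGbd : ∀ x ∈ B, ‖f' x‖ ≤ G)
    (r : EuclideanSpace ℝ (Fin n) → ℝ) (hr : ConvexOn ℝ Set.univ r)
    (η : ℝ) (hη : η = (1/2) * min α (1/(4*G*D)))
    (ε : ℝ) (hε : 0 < ε)
    (Aprev At : Matrix (Fin n) (Fin n) ℝ) (hAprev : Aprev.PosDef)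
    (wt : EuclideanSpace ℝ (Fin n)) (hwt : wt ∈ B)
    (hAt : At = Aprev + Matrix.vecMulVec (f' wt) (f' wt))
    (wnext : EuclideanSpace ℝ (Fin n)) (hwnext : wnext ∈ B)
    (hmin : ∀ w ∈ B,
      ⟪f' wt, wnext - wt⟫ + r wnext + η * bregman At wnext wt ≤
        ⟪f' wt, w - wt⟫ + r w + η * bregman At w wt)
    (wstar : EuclideanSpace ℝ (Fin n)) (hwstar : wstar ∈ B) :
    (1/η) * (f wt - f wstar + r wnext - r wstar) ≤
      bregman Aprev wstar wt - bregman At wstar wnext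
        + (1/(2*η^2)) * ((f' wt) ⬝ᵥ (At⁻¹).mulVec (f' wt)) := by
  have hGD : (0:ℝ) < G * D := mul_pos hG hD
  have hη0 : 0 < η := by
    rw [hη]
    have h1 : (0:ℝ) < min α (1/(4*G*D)) := lt_min hα (by positivity)
    linarith
  have h2ηα : 2*η ≤ α := by
    have := min_le_left α (1/(4*G*D)); rw [hη]; linarith
  have h2ηGD : 2*η ≤ 1/(4*G*D) := by
    have := min_le_right α (1/(4*G*D)); rw [hη]; linarith
  -- Step A : exp-concavity bound
  have hZbd : |⟪f' wt, wstar - wt⟫| ≤ G * D := by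
    calc |⟪f' wt, wstar - wt⟫| ≤ ‖f' wt‖ * ‖wstar - wt‖ := abs_real_inner_le_norm _ _
      _ ≤ G * D := mul_le_mul (hGbd wt hwt) (hdiam wstar hwstar wt hwt)
          (norm_nonneg _) hG.le
  have hsmall : |2*η*⟪f' wt, wstar - wt⟫| ≤ 1/2 := by
    rw [abs_mul, abs_of_pos (by linarith : (0:ℝ) < 2*η)]
    have h1 : 2*η*|⟪f' wt, wstar - wt⟫| ≤ (1/(4*G*D))*(G*D) :=
      mul_le_mul h2ηGD hZbd (abs_nonneg _) (by positivity)
    have h2 : (1/(4*G*D))*(G*D) = 1/4 := by field_simp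
    linarith
  have hA := erep_exp_concave_grad hB hα hη0 h2ηα hdiff hexp hwt hwstar hsmall
  -- positive definiteness of At
  have hAtpd : At.PosDef := by
    rw [hAt]; exact hAprev.add_posSemidef (erep_vecMulVec_posSemidef _)
  have hK0 : 0 ≤ bregman At wstar wnext := erep_bregman_nonneg hAtpd.posSemidef _ _
  -- Step B : strong minimality
  have hstrong : ⟪f' wt, wnext - wt⟫ + r wnext + η * bregman At wnext wt
      + η * bregman At wstar wnext
      ≤ ⟪f' wt, wstar - wt⟫ + r wstar + η * bregman At wstar wt := by
    have hlam : ∀ l : ℝ, 0 < l → l ≤ 1 →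
        ⟪f' wt, wnext - wt⟫ + r wnext + η * bregman At wnext wt
          + η * (1 - l) * bregman At wstar wnext
        ≤ ⟪f' wt, wstar - wt⟫ + r wstar + η * bregman At wstar wt := by
      intro l hl0 hl1
      set wl : EuclideanSpace ℝ (Fin n) := (1-l) • wnext + l • wstar with hwl
      have hwlB : wl ∈ B := hB hwnext hwstar (by linarith) hl0.le (by ring)
      have hbr : bregman At wl wt = (1-l) * bregman At wnext wt + l * bregman At wstar wt
          - (1-l) * l * bregman At wnext wstar :=
        erep_bregman_comb At wnext wstar wt (1-l) l (by ring)
      have hbs : bregman At wnext wstar = bregman At wstar wnext := erep_bregman_symm _ _ _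
      have hinner : ⟪f' wt, wl - wt⟫
          = (1-l) * ⟪f' wt, wnext - wt⟫ + l * ⟪f' wt, wstar - wt⟫ := by
        have h : wl - wt = (1-l) • (wnext - wt) + l • (wstar - wt) := by rw [hwl]; module
        rw [h, inner_add_right, real_inner_smul_right, real_inner_smul_right]
      have hrw : r wl ≤ (1-l) * r wnext + l * r wstar := by
        have := hr.2 (Set.mem_univ wnext) (Set.mem_univ wstar)
          (by linarith : (0:ℝ) ≤ 1-l) hl0.le (by ring)
        simpa only [smul_eq_mul] using this
      have hm := hmin wl hwlB
      rw [hinner, hbr, hbs] at hm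
      have hdiv : l * (⟪f' wt, wnext - wt⟫ + r wnext + η * bregman At wnext wt
          + η * (1 - l) * bregman At wstar wnext)
          ≤ l * (⟪f' wt, wstar - wt⟫ + r wstar + η * bregman At wstar wt) := by
        nlinarith [hm, hrw]
      exact le_of_mul_le_mul_left hdiv hl0
    by_contra hcon
    push_neg at hcon
    set K := bregman At wstar wnext with hKdef
    set δ := (⟪f' wt, wnext - wt⟫ + r wnext + η * bregman At wnext wt + η * K)
      - (⟪f' wt, wstar - wt⟫ + r wstar + η * bregman At wstar wt) with hδ
    have hδ0 : 0 < δ := by rw [hδ]; linarith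
    have hden : (0:ℝ) < η*K + 1 := by nlinarith
    set l := min 1 (δ/(η*K+1)) with hl
    have hl0 : 0 < l := lt_min one_pos (by positivity)
    have hl1 : l ≤ 1 := min_le_left _ _
    have h1 := hlam l hl0 hl1
    have h2 : l * (η*K) ≤ (δ/(η*K+1)) * (η*K) :=
      mul_le_mul_of_nonneg_right (min_le_right _ _) (by positivity)
    have h3 : (δ/(η*K+1)) * (η*K) < δ := by
      rw [div_mul_eq_mul_div, div_lt_iff₀ hden]
      nlinarith
    have h4 : l * (η*K) < δ := lt_of_le_of_lt h2 h3
    linarith [h1, h4]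
  -- Step C : quadratic bound
  have hC : -(⟪f' wt, wnext - wt⟫) - η * bregman At wnext wt
      ≤ 1/(2*η) * ((f' wt) ⬝ᵥ (At⁻¹).mulVec (f' wt)) := by
    have h := erep_quad_bound At hAtpd (f' wt) ((wnext - wt : EuclideanSpace ℝ (Fin n))) η hη0
    rw [erep_inner_eq_dot]
    unfold bregman
    simp only [WithLp.ofLp_sub] at h ⊢
    linarith [h]
  -- Step D : bregman splitting
  have hD2 : bregman At wstar wt
      = bregman Aprev wstar wt + (1/2) * (⟪f' wt, wstar - wt⟫)^2 := by
    rw [hAt, erep_bregman_split, ← erep_inner_eq_dot]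
    rfl
  rw [hD2] at hstrong
  -- final combination
  have hmain : f wt - f wstar + r wnext - r wstar
      ≤ η * bregman Aprev wstar wt - η * bregman At wstar wnext
        + 1/(2*η) * ((f' wt) ⬝ᵥ (At⁻¹).mulVec (f' wt)) := by
    linarith [hA, hstrong, hC]
  have hfinal := mul_le_mul_of_nonneg_left hmain
    (by positivity : (0:ℝ) ≤ 1/η)
  have heq : (1/η) * (η * bregman Aprev wstar wt - η * bregman At wstar wnext
      + 1/(2*η) * ((f' wt) ⬝ᵥ (At⁻¹).mulVec (f' wt)))
      = bregman Aprev wstar wt - bregman At wstar wnext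
        + (1/(2*η^2)) * ((f' wt) ⬝ᵥ (At⁻¹).mulVec (f' wt)) := by
    field_simp
  rw [heq] at hfinal
  exact hfinal
end

section
/- Let B ⊆ ℝⁿ be an open convex set, let f : ℝⁿ → ℝ be twice continuously differentiable and σ-strongly convex on B (σ > 0), and suppose ‖∇f(x)‖₂ ≤ G for all x ∈ B with G > 0. Then f is (σ/G²)-exp-concave on B, i.e., x ↦ exp(−(σ/G²)·f(x)) is concave on B. -/
open RealInnerProductSpace

private lemma exp_cubic_bound {x : ℝ} (hx : |x| ≤ 1) :
    Real.exp x ≤ 1 + x + x ^ 2 / 2 + 2 / 9 * |x| ^ 3 := by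
  have h := Real.exp_bound hx (n := 3) (by norm_num)
  have hsum : ∑ m ∈ Finset.range 3, x ^ m / m.factorial = 1 + x + x ^ 2 / 2 := by
    norm_num [Finset.sum_range_succ]
  rw [hsum] at h
  have h' := (abs_sub_le_iff.1 h).1
  norm_num [Nat.factorial] at h'
  nlinarith [h']

set_option maxHeartbeats 1000000 in
private lemma key_scalar_w (u w : ℝ) (hu : 0 ≤ u) (hwu : w ≤ u) (hlow : u ^ 2 - u ≤ w) :
    Real.exp (w - u ^ 2 / 2) ≤ 1 + w := by
  rcases le_or_gt 0 w with hw0 | hw0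
  · rcases le_or_gt w 1 with hw1 | hw1
    · -- 0 ≤ w ≤ 1
      have hxabs : |w - w ^ 2 / 2| ≤ 1 := by
        rw [abs_of_nonneg (by nlinarith)]; nlinarith
      have hE := exp_cubic_bound hxabs
      rw [abs_of_nonneg (by nlinarith)] at hE
      have hmono : Real.exp (w - u ^ 2 / 2) ≤ Real.exp (w - w ^ 2 / 2) :=
        Real.exp_le_exp.mpr (by nlinarith)
      have hcube : (w - w ^ 2 / 2) ^ 3 ≤ w ^ 3 :=
        pow_le_pow_left₀ (by nlinarith) (by nlinarith) 3
      have hw4 : w ^ 4 ≤ w ^ 3 := by nlinarith [pow_nonneg hw0 3]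
      nlinarith [hmono, hE, hcube, hw4]
    · -- w > 1
      have hmono : Real.exp (w - u ^ 2 / 2) ≤ Real.exp (1 / 2 : ℝ) :=
        Real.exp_le_exp.mpr (by nlinarith [sq_nonneg (w - 1)])
      have hE := exp_cubic_bound (x := (1:ℝ)/2) (by rw [abs_of_nonneg] <;> norm_num)
      rw [abs_of_nonneg (by norm_num)] at hE
      nlinarith [hmono, hE]
  · -- w < 0
    have h4w : (0:ℝ) ≤ 1 + 4 * w := by nlinarith [sq_nonneg (2 * u - 1)]
    obtain ⟨r, hr0, hr2⟩ : ∃ r : ℝ, 0 ≤ r ∧ r ^ 2 = 1 + 4 * w :=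
      ⟨Real.sqrt (1 + 4 * w), Real.sqrt_nonneg _, Real.sq_sqrt h4w⟩
    have hr1 : r ≤ 1 := by nlinarith [sq_nonneg (r - 1)]
    obtain ⟨q, hq⟩ : ∃ q : ℝ, q = (1 - r) / 2 := ⟨_, rfl⟩
    have hq0 : 0 ≤ q := by rw [hq]; linarith
    have hq12 : q ≤ 1 / 2 := by rw [hq]; linarith
    have hwq : w = q ^ 2 - q := by
      rw [hq]; linear_combination (-1/4 : ℝ) * hr2
    have hlow' : u ^ 2 - u ≤ q ^ 2 - q := by linarith [hlow, hwq.le]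
    have huq : q ≤ u := by nlinarith [hlow', hq12, hq0, hu]
    have hu2 : q ^ 2 ≤ u ^ 2 := by nlinarith [huq, hq0]
    have hexp : w - u ^ 2 / 2 ≤ q ^ 2 / 2 - q := by linarith [hwq.le, hu2]
    have hxabs : |q ^ 2 / 2 - q| ≤ 1 := by
      rw [abs_of_nonpos (by nlinarith)]; nlinarith
    have hE := exp_cubic_bound hxabs
    rw [abs_of_nonpos (by nlinarith), show -(q ^ 2 / 2 - q) = q - q ^ 2 / 2 from by ring] at hE
    have hmono := Real.exp_le_exp.mpr hexp
    have hqq1 : 0 ≤ q - q ^ 2 / 2 := by nlinarith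
    have hqq2 : q - q ^ 2 / 2 ≤ q := by nlinarith
    have hcube : (q - q ^ 2 / 2) ^ 3 ≤ q ^ 3 := pow_le_pow_left₀ hqq1 hqq2 3
    have hq4 : q ^ 4 ≤ q ^ 3 / 2 := by nlinarith [pow_nonneg hq0 3]
    nlinarith [hmono, hE, hcube, hq4, hwq.le, hwq.ge]

private lemma key_scalar {u v : ℝ} (hu : 0 ≤ u) (h1 : -u ≤ v) (h2 : v ≤ u - u ^ 2) :
    Real.exp (-v - u ^ 2 / 2) ≤ 1 - v := by
  have h := key_scalar_w u (-v) hu (by linarith) (by linarith)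
  have he : -v - u ^ 2 / 2 = -v - u ^ 2 / 2 := rfl
  calc Real.exp (-v - u ^ 2 / 2) = Real.exp (-v - u ^ 2 / 2) := rfl
    _ ≤ 1 + -v := h
    _ = 1 - v := by ring

private lemma strongconvex_first_order {E : Type*} [NormedAddCommGroup E]
    [InnerProductSpace ℝ E] [CompleteSpace E]
    {B : Set E} {σ : ℝ} {f : E → ℝ} (hf : Differentiable ℝ f)
    (hsc : StrongConvexOn B σ f) {x y : E} (hx : x ∈ B) (hy : y ∈ B) :
    f x + ⟪gradient f x, y - x⟫ + σ / 2 * ‖y - x‖ ^ 2 ≤ f y := by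
  have hgrad : HasGradientAt f (gradient f x) x := (hf x).hasGradientAt
  have hfd : HasFDerivAt f ((InnerProductSpace.toDual ℝ E) (gradient f x)) x :=
    hasGradientAt_iff_hasFDerivAt.mp hgrad
  have hline : HasDerivAt (fun t : ℝ => x + t • (y - x)) (y - x) 0 := by
    simpa using ((hasDerivAt_id (0:ℝ)).smul_const (y - x)).const_add x
  have hfd' : HasFDerivAt f ((InnerProductSpace.toDual ℝ E) (gradient f x))
      ((fun t : ℝ => x + t • (y - x)) 0) := by simpa using hfd
  have hder : HasDerivAt (fun t : ℝ => f (x + t • (y - x))) ⟪gradient f x, y - x⟫ 0 := by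
    have hcomp := hfd'.comp_hasDerivAt 0 hline
    simpa [Function.comp_def, InnerProductSpace.toDual_apply_apply] using hcomp
  set φ : ℝ → ℝ := fun t => f (x + t • (y - x)) with hφ
  set C : ℝ := σ / 2 * ‖x - y‖ ^ 2 with hC
  have hslope : Filter.Tendsto (slope φ 0) (nhdsWithin 0 (Set.Ioi 0))
      (nhds ⟪gradient f x, y - x⟫) :=
    (hasDerivAt_iff_tendsto_slope.mp hder).mono_left
      (nhdsWithin_mono 0 (fun t ht => Set.mem_compl_singleton_iff.mpr (ne_of_gt ht)))
  have h2 : Filter.Tendsto (fun t : ℝ => f y - f x - (1 - t) * C)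
      (nhdsWithin 0 (Set.Ioi 0)) (nhds (f y - f x - C)) := by
    have hc : Filter.Tendsto (fun t : ℝ => f y - f x - (1 - t) * C) (nhds 0)
        (nhds (f y - f x - (1 - 0) * C)) :=
      Filter.Tendsto.sub tendsto_const_nhds
        (((tendsto_const_nhds).sub (continuous_id.tendsto 0)).mul tendsto_const_nhds)
    simpa using hc.mono_left nhdsWithin_le_nhds
  have hev : ∀ᶠ t in nhdsWithin (0:ℝ) (Set.Ioi 0),
      slope φ 0 t ≤ f y - f x - (1 - t) * C := by
    filter_upwards [Ioo_mem_nhdsGT_of_mem (Set.mem_Ico.mpr ⟨le_refl (0:ℝ), zero_lt_one⟩)]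
      with t ht
    obtain ⟨ht1, ht2⟩ := Set.mem_Ioo.mp ht
    have hcomb := hsc.2 hx hy (show (0:ℝ) ≤ 1 - t by linarith) (le_of_lt ht1)
      (show (1 - t) + t = 1 by ring)
    have hpt : (1 - t) • x + t • y = x + t • (y - x) := by
      rw [smul_sub, sub_smul, one_smul]; abel
    rw [hpt] at hcomb
    have hφ0 : φ 0 = f x := by simp [hφ]
    have hslope_eq : slope φ 0 t = (φ t - f x) / t := by
      rw [slope_def_field, hφ0, sub_zero]
    rw [hslope_eq, div_le_iff₀ ht1]
    simp only [smul_eq_mul] at hcomb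
    rw [← hC] at hcomb
    have hφt : φ t = f (x + t • (y - x)) := rfl
    rw [hφt]
    nlinarith [hcomb]
  have hlim := le_of_tendsto_of_tendsto hslope h2 hev
  have hnorm : ‖x - y‖ = ‖y - x‖ := norm_sub_rev _ _
  rw [hC, hnorm] at hlim
  linarith

/-- a twice continuously differentiable `σ`-strongly convex function whose
gradient norm is bounded by `G` on an open convex set `B` is `(σ/G²)`-exp-concave on `B`. -/
theorem strongConvex_expConcave {n : ℕ}
    (B : Set (EuclideanSpace ℝ (Fin n))) (hB : Convex ℝ B) (hBo : IsOpen B)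
    (σ G : ℝ) (hσ : 0 < σ) (hG : 0 < G)
    (f : EuclideanSpace ℝ (Fin n) → ℝ) (hf : ContDiff ℝ 2 f)
    (hsc : StrongConvexOn B σ f)
    (hgrad : ∀ x ∈ B, ‖gradient f x‖ ≤ G) :
    ConcaveOn ℝ B (fun x => Real.exp (-(σ / G ^ 2) * f x)) := by
  have hfd : Differentiable ℝ f := hf.differentiable two_ne_zero
  set α := σ / G ^ 2 with hα
  have hαpos : 0 < α := div_pos hσ (by positivity)
  have hαG : α * G ^ 2 = σ := by
    rw [hα]; field_simp
  set g : EuclideanSpace ℝ (Fin n) → ℝ := fun x => Real.exp (-α * f x) with hg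
  have hgpos : ∀ x, 0 < g x := fun x => Real.exp_pos _
  have main : ∀ x ∈ B, ∀ y ∈ B, g y ≤ g x * (1 - α * ⟪gradient f x, y - x⟫) := by
    intro x hx y hy
    set s := (⟪gradient f x, y - x⟫ : ℝ) with hs
    set d := ‖y - x‖ with hd
    have hd0 : 0 ≤ d := norm_nonneg _
    have h1 := strongconvex_first_order hfd hsc hx hy
    have h2 := strongconvex_first_order hfd hsc hy hx
    have hnorm : ‖x - y‖ = d := by rw [hd]; exact norm_sub_rev _ _
    rw [hnorm] at h2
    have hcs1 : |s| ≤ G * d := by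
      calc |s| ≤ ‖gradient f x‖ * d := abs_real_inner_le_norm _ _
        _ ≤ G * d := mul_le_mul_of_nonneg_right (hgrad x hx) hd0
    have hcs2 : |(⟪gradient f y, x - y⟫ : ℝ)| ≤ G * d := by
      calc |(⟪gradient f y, x - y⟫ : ℝ)| ≤ ‖gradient f y‖ * ‖x - y‖ :=
            abs_real_inner_le_norm _ _
        _ ≤ G * d := by
            rw [hnorm]; exact mul_le_mul_of_nonneg_right (hgrad y hy) hd0
    have hs_lo : -(G * d) ≤ s := (abs_le.mp hcs1).1
    have hs_up : s ≤ G * d - σ * d ^ 2 := by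
      have hb := (abs_le.mp hcs2).1
      linarith [h1, h2, hb]
    have hu0 : 0 ≤ α * (G * d) := by positivity
    have hv1 : -(α * (G * d)) ≤ α * s := by
      nlinarith [mul_le_mul_of_nonneg_left hs_lo hαpos.le]
    have hid : (α * (G * d)) ^ 2 = α * (σ * d ^ 2) := by
      have h' : (α * (G * d)) ^ 2 = α * (α * G ^ 2) * d ^ 2 := by ring
      rw [h', hαG]; ring
    have hv2 : α * s ≤ α * (G * d) - (α * (G * d)) ^ 2 := by
      nlinarith [mul_le_mul_of_nonneg_left hs_up hαpos.le, hid]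
    have hkey := key_scalar hu0 hv1 hv2
    rw [show -(α * s) - (α * (G * d)) ^ 2 / 2 = -(α * s) - α * (σ * d ^ 2) / 2 by
      rw [hid]] at hkey
    have hexp : -α * f y ≤ -α * f x + (-(α * s) - α * (σ * d ^ 2) / 2) := by
      nlinarith [mul_le_mul_of_nonneg_left h1 hαpos.le]
    calc g y ≤ Real.exp (-α * f x) * Real.exp (-(α * s) - α * (σ * d ^ 2) / 2) := by
          rw [hg, ← Real.exp_add]
          exact Real.exp_le_exp.mpr hexp
      _ ≤ g x * (1 - α * s) :=
          mul_le_mul_of_nonneg_left hkey (Real.exp_pos _).le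
  refine ⟨hB, ?_⟩
  intro x hx y hy a b ha hb hab
  have hzB : a • x + b • y ∈ B := hB hx hy ha hb hab
  set z := a • x + b • y with hz
  have h1 := main z hzB x hx
  have h2 := main z hzB y hy
  have h0 : a • (x - z) + b • (y - z) = 0 := by
    rw [smul_sub, smul_sub]
    rw [show a • x - a • z + (b • y - b • z) = (a • x + b • y) - (a • z + b • z) by abel]
    rw [← add_smul, hab, one_smul, ← hz, sub_self]
  have hzero : a * ⟪gradient f z, x - z⟫ + b * ⟪gradient f z, y - z⟫ = 0 := by
    have h' : a * ⟪gradient f z, x - z⟫ + b * ⟪gradient f z, y - z⟫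
        = ⟪gradient f z, a • (x - z) + b • (y - z)⟫ := by
      rw [inner_add_right, real_inner_smul_right, real_inner_smul_right]
    rw [h', h0, inner_zero_right]
  show a • g x + b • g y ≤ g z
  simp only [smul_eq_mul]
  have h1' := mul_le_mul_of_nonneg_left h1 ha
  have h2' := mul_le_mul_of_nonneg_left h2 hb
  have hzz : g z * (α * (a * ⟪gradient f z, x - z⟫ + b * ⟪gradient f z, y - z⟫)) = 0 := by
    rw [hzero, mul_zero, mul_zero]
  have habz : a * g z + b * g z = g z := by rw [← add_mul, hab, one_mul]
  nlinarith [h1', h2', hzz, habz]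
end

section
/- Let ε > 0, G > 0, let u₁, …, u_T ∈ ℝⁿ satisfy ‖u_t‖₂ ≤ G for all t, and set A₀ = ε·Iₙ and A_T = ε·Iₙ + Σ_{t=1}^{T} u_t u_tᵀ. Then log(det(A_T)/det(A₀)) ≤ n·log(1 + T·G²/(n·ε)). -/
open Matrix

lemma trace_eq_sum_eigenvalues' {m : Type*} [Fintype m] [DecidableEq m]
    {A : Matrix m m ℝ} (hA : A.IsHermitian) :
    A.trace = ∑ i, hA.eigenvalues i := by
  simpa using hA.trace_eq_sum_eigenvalues

lemma posSemidef_vecMulVec_self {m : Type*} [Fintype m] (v : m → ℝ) :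
    (Matrix.vecMulVec v v).PosSemidef := by
  rw [Matrix.posSemidef_iff_dotProduct_mulVec]
  constructor
  · ext i j
    simp [Matrix.vecMulVec_apply, Matrix.conjTranspose_apply, mul_comm]
  · intro x
    have h : (Matrix.vecMulVec v v) *ᵥ x = (v ⬝ᵥ x) • v := by
      ext i
      simp [Matrix.mulVec, Matrix.vecMulVec_apply, dotProduct, Finset.mul_sum, mul_assoc]
      rw [Finset.sum_mul]
      exact Finset.sum_congr rfl fun j _ => by ring
    rw [h]
    simp only [star_trivial, dotProduct_smul, smul_eq_mul]
    have : x ⬝ᵥ v = v ⬝ᵥ x := dotProduct_comm x v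
    rw [this]
    exact mul_self_nonneg _

/-- det ≤ (trace/n)^n for positive semidefinite matrices. -/
lemma det_le_trace_div_card_pow {m : ℕ} (hm : 0 < m) {A : Matrix (Fin m) (Fin m) ℝ}
    (hA : A.PosSemidef) : A.det ≤ (A.trace / m) ^ m := by
  have hherm := hA.isHermitian
  have hev : ∀ i, 0 ≤ hherm.eigenvalues i := hA.eigenvalues_nonneg
  have hdet : A.det = ∏ i, hherm.eigenvalues i := by
    simpa using hherm.det_eq_prod_eigenvalues
  have htr : A.trace = ∑ i, hherm.eigenvalues i := trace_eq_sum_eigenvalues' hherm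
  have hm' : (m : ℝ) ≠ 0 := Nat.cast_ne_zero.mpr hm.ne'
  have hamgm := Real.geom_mean_le_arith_mean_weighted Finset.univ
      (fun _ => 1 / (m : ℝ)) hherm.eigenvalues
      (fun i _ => by positivity)
      (by simp [Finset.card_univ]; field_simp)
      (fun i _ => hev i)
  have key : (∏ i, hherm.eigenvalues i ^ ((1 : ℝ) / m)) ^ m
      = ∏ i, hherm.eigenvalues i := by
    rw [← Finset.prod_pow]
    refine Finset.prod_congr rfl fun i _ => ?_
    rw [← Real.rpow_natCast (hherm.eigenvalues i ^ ((1:ℝ)/m)) m,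
      ← Real.rpow_mul (hev i)]
    rw [one_div, inv_mul_cancel₀ hm', Real.rpow_one]
  have hprod_nonneg : 0 ≤ ∏ i, hherm.eigenvalues i ^ ((1 : ℝ) / m) :=
    Finset.prod_nonneg fun i _ => Real.rpow_nonneg (hev i) _
  calc A.det = (∏ i, hherm.eigenvalues i ^ ((1 : ℝ) / m)) ^ m := by rw [key, hdet]
    _ ≤ (∑ i, (1 / (m:ℝ)) * hherm.eigenvalues i) ^ m :=
        pow_le_pow_left₀ hprod_nonneg hamgm m
    _ = (A.trace / m) ^ m := by
        rw [htr, Finset.sum_div]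
        congr 1
        exact Finset.sum_congr rfl fun i _ => by ring

/-- with `A₀ = ε·Iₙ` and `A_T = ε·Iₙ + Σ_{t=1}^T u_t u_tᵀ` where
`‖u_t‖₂ ≤ G`, one has `log(det A_T / det A₀) ≤ n·log(1 + T·G²/(n·ε))`. -/
theorem log_det_ratio_bound {n : ℕ} (ε G : ℝ) (hε : 0 < ε) (hG : 0 < G) (T : ℕ)
    (u : ℕ → EuclideanSpace ℝ (Fin n)) (hu : ∀ t, ‖u t‖ ≤ G)
    (A0 AT : Matrix (Fin n) (Fin n) ℝ)
    (hA0 : A0 = ε • (1 : Matrix (Fin n) (Fin n) ℝ))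
    (hAT : AT = ε • (1 : Matrix (Fin n) (Fin n) ℝ)
      + ∑ t ∈ Finset.Icc 1 T, Matrix.vecMulVec (u t) (u t)) :
    Real.log (AT.det / A0.det) ≤ n * Real.log (1 + T * G^2 / (n * ε)) := by
  rcases Nat.eq_zero_or_pos n with hn | hn
  · subst hn
    simp [Matrix.det_isEmpty]
  have hn' : (n : ℝ) ≠ 0 := Nat.cast_ne_zero.mpr hn.ne'
  have hnpos : (0:ℝ) < n := Nat.cast_pos.mpr hn
  -- ε • 1 is positive definite
  have hsmul : (ε • (1 : Matrix (Fin n) (Fin n) ℝ)) = Matrix.diagonal (fun _ => ε) := by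
    ext i j
    by_cases h : i = j <;> simp [Matrix.diagonal_apply, Matrix.one_apply, h]
  have hpd0 : (ε • (1 : Matrix (Fin n) (Fin n) ℝ)).PosDef := by
    rw [hsmul]
    exact Matrix.PosDef.diagonal (fun _ => hε)
  -- sum of vecMulVec is PSD
  have hpsd : (∑ t ∈ Finset.Icc 1 T, Matrix.vecMulVec (u t) (u t)).PosSemidef := by
    induction (Finset.Icc 1 T) using Finset.induction with
    | empty => simpa using Matrix.PosSemidef.zero
    | insert _ _ h ih =>
        rw [Finset.sum_insert h]
        exact (posSemidef_vecMulVec_self _).add ih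
  have hpdT : AT.PosDef := by
    rw [hAT]; exact hpd0.add_posSemidef hpsd
  have hdetT : 0 < AT.det := hpdT.det_pos
  -- trace bound
  have hnormsq : ∀ t, ∑ i, (u t) i * (u t) i ≤ G ^ 2 := by
    intro t
    have h1 : ‖u t‖ ^ 2 = ∑ i, ‖(u t) i‖ ^ 2 := PiLp.norm_sq_eq_of_L2 _ _
    have h2 : ∑ i, (u t) i * (u t) i = ‖u t‖ ^ 2 := by
      rw [h1]
      exact Finset.sum_congr rfl fun i _ => by
        rw [Real.norm_eq_abs, sq_abs]; ring
    rw [h2]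
    exact pow_le_pow_left₀ (norm_nonneg _) (hu t) 2
  have htraceV : ∀ t, (Matrix.vecMulVec (u t) (u t)).trace = ∑ i, (u t) i * (u t) i := by
    intro t
    simp [Matrix.trace, Matrix.diag, Matrix.vecMulVec_apply]
  have htrace : AT.trace ≤ n * ε + T * G ^ 2 := by
    rw [hAT, Matrix.trace_add, Matrix.trace_smul, Matrix.trace_one, Matrix.trace_sum]
    simp only [smul_eq_mul, Fintype.card_fin]
    have : ∑ t ∈ Finset.Icc 1 T, (Matrix.vecMulVec (u t) (u t)).trace ≤ T * G ^ 2 := by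
      calc ∑ t ∈ Finset.Icc 1 T, (Matrix.vecMulVec (u t) (u t)).trace
          ≤ ∑ t ∈ Finset.Icc 1 T, G ^ 2 := by
            refine Finset.sum_le_sum fun t _ => ?_
            rw [htraceV t]; exact hnormsq t
        _ = T * G ^ 2 := by
            rw [Finset.sum_const, Nat.card_Icc]
            simp [nsmul_eq_mul]
    nlinarith [this]
  -- det bound
  set c : ℝ := ε + T * G ^ 2 / n with hc
  have hcpos : 0 < c := by positivity
  have hdet_le : AT.det ≤ c ^ n := by
    calc AT.det ≤ (AT.trace / n) ^ n := det_le_trace_div_card_pow hn hpdT.posSemidef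
      _ ≤ c ^ n := by
          have htr0 : 0 ≤ AT.trace := by
            rw [trace_eq_sum_eigenvalues' hpdT.isHermitian]
            exact Finset.sum_nonneg fun i _ => hpdT.posSemidef.eigenvalues_nonneg i
          apply pow_le_pow_left₀ (div_nonneg htr0 hnpos.le)
          rw [div_le_iff₀ hnpos, hc]
          rw [add_mul]
          have : T * G ^ 2 / ↑n * ↑n = T * G ^ 2 := by field_simp
          rw [this, mul_comm ε]
          exact htrace
  have hdet0 : A0.det = ε ^ n := by
    rw [hA0, Matrix.det_smul, Matrix.det_one, mul_one, Fintype.card_fin]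
  -- conclude
  rw [hdet0, Real.log_div hdetT.ne' (pow_pos hε n).ne']
  have hlog1 : Real.log AT.det ≤ n * Real.log c := by
    calc Real.log AT.det ≤ Real.log (c ^ n) := Real.log_le_log hdetT hdet_le
      _ = n * Real.log c := by rw [Real.log_pow]
  have hlog2 : Real.log (ε ^ n) = n * Real.log ε := by rw [Real.log_pow]
  rw [hlog2]
  have : (n:ℝ) * Real.log c - n * Real.log ε = n * Real.log (1 + T * G ^ 2 / (n * ε)) := by
    rw [← mul_sub, ← Real.log_div hcpos.ne' hε.ne']
    congr 2
    rw [hc]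
    field_simp [hc]
  linarith [this, hlog1]
end
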